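/- arXiv:1705.09333 — 2 statements merged into one kernel-verified Lean document; each statement's English description precedes it below -/
import Mathlib

section
/- For all τ, z in the stated domain, the following identity holds: −y ∏_{n≥1} (1−q^n)² (1−ω²y⁻⁴q^{n−1}) (1−ωy⁴q^n) / [ (1−y⁻¹q^{n−1})(1−yq^n)(1−ω²y⁻¹q^{n−1})(1−ωyq^n) ] − y ∏_{n≥1} (1−q^n)² (1−ωy⁻⁴q^{n−1}) (1−ω²y⁴q^n) / [ (1−y⁻¹q^{n−1})(1−yq^n)(1−ωy⁻¹q^{n−1})(1−ω²yq^n) ] = −i ( η(3τ) / θ₁(3τ,3z) ) · [ θ₁(τ,4z+1/3) θ₁(τ,z−1/3) + θ₁(τ,4z−1/3) θ₁(τ,z+1/3) ]. (This is the identity establishing that the graded trace attached to the class 3A of the umbral group G⁽⁷⁾ equals the umbral meromorphic Jacobi form ψ⁽⁷⁾_{3A}.) -/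
open Complex

/-- Dedekind eta function via its infinite product:
    `η(τ) = e^{πiτ/12} ∏_{n≥1} (1 − e^{2πinτ})`. -/
noncomputable def Eta (τ : ℂ) : ℂ :=
  Complex.exp (Real.pi * Complex.I * τ / 12) *
    ∏' n : ℕ, (1 - Complex.exp (2 * Real.pi * Complex.I * ((n : ℂ) + 1) * τ))

/-- Jacobi theta function `θ₁` via its triple product expansion. -/
noncomputable def Theta1 (τ w : ℂ) : ℂ :=
  -Complex.I * Complex.exp (Real.pi * Complex.I * τ / 4) *
    Complex.exp (Real.pi * Complex.I * w) *
    ∏' n : ℕ,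
      ((1 - Complex.exp (-(2 * Real.pi * Complex.I * w)) *
            Complex.exp (2 * Real.pi * Complex.I * (n : ℂ) * τ)) *
       (1 - Complex.exp (2 * Real.pi * Complex.I * w) *
            Complex.exp (2 * Real.pi * Complex.I * ((n : ℂ) + 1) * τ)) *
       (1 - Complex.exp (2 * Real.pi * Complex.I * ((n : ℂ) + 1) * τ)))

/-- Jacobi theta function `θ₂` via its triple product expansion. -/
noncomputable def Theta2 (τ w : ℂ) : ℂ :=
  Complex.exp (Real.pi * Complex.I * τ / 4) *
    Complex.exp (Real.pi * Complex.I * w) *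
    ∏' n : ℕ,
      ((1 + Complex.exp (-(2 * Real.pi * Complex.I * w)) *
            Complex.exp (2 * Real.pi * Complex.I * (n : ℂ) * τ)) *
       (1 + Complex.exp (2 * Real.pi * Complex.I * w) *
            Complex.exp (2 * Real.pi * Complex.I * ((n : ℂ) + 1) * τ)) *
       (1 - Complex.exp (2 * Real.pi * Complex.I * ((n : ℂ) + 1) * τ)))

/-- A primitive cube root of unity, `ω = e^{2πi/3}`. -/
noncomputable def omega3 : ℂ := Complex.exp (2 * Real.pi * Complex.I / 3)

open scoped Real

/-!
Multiply numerator and denominator of the `n`-th factor of each product by the two factors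
needed to complete `(1 - u)(1 - ωu)(1 - ω²u) = 1 - u³` for `u = y⁻¹qⁿ` and `u = yqⁿ⁺¹`. The
denominator becomes the `n`-th factor of the triple product of `θ₁(3τ, 3z)`, and the numerator
the product of the `n`-th factors of `η(3τ)`, `θ₁(τ, 4z ± 1/3)` and `θ₁(τ, z ∓ 1/3)`. For
`1 < |y| < |q|⁻¹` all these products converge to nonzero limits, so the infinite products split
accordingly, and only the exponential prefactors of `η` and `θ₁` remain to be compared.
-/

lemma one_sub_mul_one_sub_mul_one_sub_eq_one_sub_cube {R : Type*} [CommRing R] {ζ : R}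
    (hζ : ζ ^ 2 + ζ + 1 = 0) (u : R) :
    (1 - u) * (1 - ζ * u) * (1 - ζ ^ 2 * u) = 1 - u ^ 3 := by
  linear_combination (-u + ζ * u ^ 2 - (ζ - 1) * u ^ 3) * hζ

def jacobiTripleTerm {K : Type*} [Field K] (q x : K) (n : ℕ) : K :=
  (1 - x⁻¹ * q ^ n) * (1 - x * q ^ (n + 1)) * (1 - q ^ (n + 1))

noncomputable def jacobiTripleProd (q x : ℂ) : ℂ := ∏' n, jacobiTripleTerm q x n

lemma quotient_eq_jacobiTripleTerm {K : Type*} [Field K] {ζ : K} (hζ : ζ ^ 2 + ζ + 1 = 0)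
    (q y : K) (n : ℕ) (hT : jacobiTripleTerm (q ^ 3) (y ^ 3) n ≠ 0) :
    (1 - q ^ (n + 1)) ^ 2 * (1 - ζ ^ 2 * y⁻¹ ^ 4 * q ^ n) * (1 - ζ * y ^ 4 * q ^ (n + 1)) /
        ((1 - y⁻¹ * q ^ n) * (1 - y * q ^ (n + 1)) *
          (1 - ζ ^ 2 * y⁻¹ * q ^ n) * (1 - ζ * y * q ^ (n + 1)))
      = (1 - (q ^ 3) ^ (n + 1)) * jacobiTripleTerm q (ζ * y ^ 4) n *
          jacobiTripleTerm q (ζ ^ 2 * y) n / jacobiTripleTerm (q ^ 3) (y ^ 3) n := by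
  have hζ_inv : ζ⁻¹ = ζ ^ 2 := inv_eq_of_mul_eq_one_right (by linear_combination (ζ - 1) * hζ)
  have hζ_sq_inv : (ζ ^ 2)⁻¹ = ζ := by
    rw [← inv_pow, hζ_inv]; linear_combination ζ * (ζ - 1) * hζ
  have cube := one_sub_mul_one_sub_mul_one_sub_eq_one_sub_cube hζ
  have hT_eq : jacobiTripleTerm (q ^ 3) (y ^ 3) n =
      ((1 - y⁻¹ * q ^ n) * (1 - ζ * (y⁻¹ * q ^ n)) * (1 - ζ ^ 2 * (y⁻¹ * q ^ n))) *
      ((1 - y * q ^ (n + 1)) * (1 - ζ * (y * q ^ (n + 1))) * (1 - ζ ^ 2 * (y * q ^ (n + 1)))) *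
      (1 - (q ^ 3) ^ (n + 1)) := by
    rw [cube, cube, jacobiTripleTerm]; ring
  rw [hT_eq] at hT ⊢
  simp only [jacobiTripleTerm, mul_inv, hζ_inv, hζ_sq_inv]
  rw [div_eq_div_iff (by simp only [ne_eq, mul_eq_zero, not_or, mul_assoc] at hT ⊢; tauto) hT]
  ring

lemma norm_mul_pow_lt_one {c q : ℂ} (hc : ‖c‖ < 1) (hq : ‖q‖ ≤ 1) (n : ℕ) :
    ‖c * q ^ n‖ < 1 := by
  rw [norm_mul, norm_pow]
  exact mul_lt_one_of_nonneg_of_lt_one_left (norm_nonneg c) hc (pow_le_one₀ (norm_nonneg q) hq)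

lemma one_sub_ne_zero_of_norm_lt_one {u : ℂ} (hu : ‖u‖ < 1) : 1 - u ≠ 0 :=
  sub_ne_zero.2 fun h ↦ by simp [← h] at hu

lemma summable_norm_neg_mul_pow (c : ℂ) {q : ℂ} (hq : ‖q‖ < 1) :
    Summable fun n : ℕ ↦ ‖-(c * q ^ n)‖ := by
  simpa using (summable_geometric_of_lt_one (norm_nonneg q) hq).mul_left ‖c‖

lemma multipliable_one_sub_mul_pow (c : ℂ) {q : ℂ} (hq : ‖q‖ < 1) :
    Multipliable fun n : ℕ ↦ 1 - c * q ^ n := by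
  simpa [sub_eq_add_neg] using multipliable_one_add_of_summable (summable_norm_neg_mul_pow c hq)

lemma tprod_one_sub_mul_pow_ne_zero {c q : ℂ} (hc : ‖c‖ < 1) (hq : ‖q‖ < 1) :
    ∏' n : ℕ, (1 - c * q ^ n) ≠ 0 := by
  simpa [sub_eq_add_neg] using tprod_one_add_ne_zero_of_summable
    (fun n ↦ by simpa [sub_eq_add_neg] using
      one_sub_ne_zero_of_norm_lt_one (norm_mul_pow_lt_one hc hq.le n))
    (summable_norm_neg_mul_pow c hq)

lemma jacobiTripleTerm_eq (q x : ℂ) :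
    jacobiTripleTerm q x = fun n ↦ (1 - x⁻¹ * q ^ n) * (1 - x * q * q ^ n) * (1 - q * q ^ n) := by
  ext n; simp only [jacobiTripleTerm]; ring

lemma multipliable_jacobiTripleTerm (x : ℂ) {q : ℂ} (hq : ‖q‖ < 1) :
    Multipliable (jacobiTripleTerm q x) := by
  rw [jacobiTripleTerm_eq]
  exact ((multipliable_one_sub_mul_pow _ hq).mul (multipliable_one_sub_mul_pow _ hq)).mul
    (multipliable_one_sub_mul_pow _ hq)

lemma jacobiTripleTerm_ne_zero {q x : ℂ} (hq : ‖q‖ < 1) (hx : 1 < ‖x‖) (hxq : ‖x * q‖ < 1)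
    (n : ℕ) : jacobiTripleTerm q x n ≠ 0 := by
  have hx' : ‖x⁻¹‖ < 1 := by rw [norm_inv]; exact inv_lt_one_of_one_lt₀ hx
  rw [jacobiTripleTerm_eq]
  exact mul_ne_zero (mul_ne_zero
    (one_sub_ne_zero_of_norm_lt_one (norm_mul_pow_lt_one hx' hq.le n))
    (one_sub_ne_zero_of_norm_lt_one (norm_mul_pow_lt_one hxq hq.le n)))
    (one_sub_ne_zero_of_norm_lt_one (norm_mul_pow_lt_one hq hq.le n))

lemma jacobiTripleProd_ne_zero {q x : ℂ} (hq : ‖q‖ < 1) (hx : 1 < ‖x‖) (hxq : ‖x * q‖ < 1) :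
    jacobiTripleProd q x ≠ 0 := by
  have hx' : ‖x⁻¹‖ < 1 := by rw [norm_inv]; exact inv_lt_one_of_one_lt₀ hx
  rw [jacobiTripleProd, jacobiTripleTerm_eq,
    ((multipliable_one_sub_mul_pow _ hq).mul (multipliable_one_sub_mul_pow _ hq)).tprod_mul
      (multipliable_one_sub_mul_pow _ hq),
    (multipliable_one_sub_mul_pow _ hq).tprod_mul (multipliable_one_sub_mul_pow _ hq)]
  exact mul_ne_zero (mul_ne_zero (tprod_one_sub_mul_pow_ne_zero hx' hq)
    (tprod_one_sub_mul_pow_ne_zero hxq hq)) (tprod_one_sub_mul_pow_ne_zero hq hq)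

lemma tprod_quotient_eq_jacobiTripleProd {ζ q x : ℂ} (hζ : ζ ^ 2 + ζ + 1 = 0) (hq : ‖q‖ < 1)
    (hx : 1 < ‖x‖) (hxq : ‖x * q‖ < 1) :
    ∏' n : ℕ, ((1 - q ^ (n + 1)) ^ 2 * (1 - ζ ^ 2 * x⁻¹ ^ 4 * q ^ n) *
          (1 - ζ * x ^ 4 * q ^ (n + 1)) /
        ((1 - x⁻¹ * q ^ n) * (1 - x * q ^ (n + 1)) *
          (1 - ζ ^ 2 * x⁻¹ * q ^ n) * (1 - ζ * x * q ^ (n + 1))))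
      = (∏' n : ℕ, (1 - (q ^ 3) ^ (n + 1))) * jacobiTripleProd q (ζ * x ^ 4) *
          jacobiTripleProd q (ζ ^ 2 * x) / jacobiTripleProd (q ^ 3) (x ^ 3) := by
  have hq₃ : ‖q ^ 3‖ < 1 := by rw [norm_pow]; exact pow_lt_one₀ (norm_nonneg q) hq (by norm_num)
  have hx₃ : 1 < ‖x ^ 3‖ := by rw [norm_pow]; exact one_lt_pow₀ hx (by norm_num)
  have hxq₃ : ‖x ^ 3 * q ^ 3‖ < 1 := by
    rw [← mul_pow, norm_pow]; exact pow_lt_one₀ (norm_nonneg _) hxq (by norm_num)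
  have hE := ModularForm.multipliable_one_sub_pow hq₃
  have hA := multipliable_jacobiTripleTerm (ζ * x ^ 4) hq
  have hB := multipliable_jacobiTripleTerm (ζ ^ 2 * x) hq
  rw [tprod_congr fun n ↦ quotient_eq_jacobiTripleTerm hζ q x n
      (jacobiTripleTerm_ne_zero hq₃ hx₃ hxq₃ n),
    ((hE.mul hA).mul hB).tprod_div₀ (multipliable_jacobiTripleTerm _ hq₃)
      (jacobiTripleProd_ne_zero hq₃ hx₃ hxq₃),
    (hE.mul hA).tprod_mul hB, hE.tprod_mul hA]
  rfl

lemma norm_cexp_two_pi_I_mul (w : ℂ) : ‖cexp (2 * π * I * w)‖ = Real.exp (-(2 * π * w.im)) := by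
  rw [norm_exp]; simp

lemma cexp_two_pi_I_mul_natCast_mul (n : ℕ) (w : ℂ) :
    cexp (2 * π * I * n * w) = cexp (2 * π * I * w) ^ n := by
  rw [← exp_nat_mul]; ring_nf

lemma Eta_eq (τ : ℂ) :
    Eta τ = cexp (π * I * τ / 12) * ∏' n : ℕ, (1 - cexp (2 * π * I * τ) ^ (n + 1)) := by
  simp only [Eta, ← Nat.cast_succ, cexp_two_pi_I_mul_natCast_mul]

lemma Theta1_eq_jacobiTripleProd (τ w : ℂ) :
    Theta1 τ w = -I * cexp (π * I * τ / 4) * cexp (π * I * w) *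
      jacobiTripleProd (cexp (2 * π * I * τ)) (cexp (2 * π * I * w)) := by
  simp only [Theta1, jacobiTripleProd, jacobiTripleTerm, exp_neg, ← Nat.cast_succ,
    cexp_two_pi_I_mul_natCast_mul]

lemma Theta1_mul_Theta1 (τ a b : ℂ) :
    Theta1 τ a * Theta1 τ b = -(cexp (π * I * τ / 4) ^ 2 * cexp (π * I * (a + b))) *
      (jacobiTripleProd (cexp (2 * π * I * τ)) (cexp (2 * π * I * a)) *
        jacobiTripleProd (cexp (2 * π * I * τ)) (cexp (2 * π * I * b))) := by
  rw [Theta1_eq_jacobiTripleProd, Theta1_eq_jacobiTripleProd, mul_add, exp_add]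
  linear_combination (cexp (π * I * τ / 4) ^ 2 * cexp (π * I * a) * cexp (π * I * b) *
    jacobiTripleProd (cexp (2 * π * I * τ)) (cexp (2 * π * I * a)) *
    jacobiTripleProd (cexp (2 * π * I * τ)) (cexp (2 * π * I * b))) * I_sq

lemma omega3_sq_add_omega3_add_one : omega3 ^ 2 + omega3 + 1 = 0 := by
  have h := (isPrimitiveRoot_exp 3 (by norm_num)).geom_sum_eq_zero (by norm_num)
  simp only [Finset.sum_range_succ, Finset.sum_range_zero, Nat.cast_ofNat] at h
  rw [omega3]; linear_combination h

lemma omega3_sq_sq : (omega3 ^ 2) ^ 2 = omega3 := by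
  linear_combination omega3 * (omega3 - 1) * omega3_sq_add_omega3_add_one

lemma cexp_two_pi_I_mul_add_third (w : ℂ) :
    cexp (2 * π * I * (w + 1 / 3)) = omega3 * cexp (2 * π * I * w) := by
  rw [omega3, ← exp_add]; ring_nf

lemma cexp_two_pi_I_mul_sub_third (w : ℂ) :
    cexp (2 * π * I * (w - 1 / 3)) = omega3 ^ 2 * cexp (2 * π * I * w) := by
  have h := cexp_two_pi_I_mul_add_third (w - 1 / 3)
  rw [sub_add_cancel] at h
  rw [h]
  linear_combination (-(omega3 - 1) * cexp (2 * π * I * (w - 1 / 3))) *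
    omega3_sq_add_omega3_add_one

/-- Umbral moonshine identity for the class 3A of G⁽⁷⁾: the graded trace equals ψ⁽⁷⁾_{3A}. -/
theorem stmt_3 (τ z : ℂ) (h1 : 0 < -z.im) (h2 : -z.im < τ.im)
    (q y : ℂ)
    (hq : q = Complex.exp (2 * Real.pi * Complex.I * τ))
    (hy : y = Complex.exp (2 * Real.pi * Complex.I * z)) :
    -y * (∏' n : ℕ,
      ((1 - q ^ (n + 1)) ^ 2 * (1 - omega3 ^ 2 * y⁻¹ ^ 4 * q ^ n) *
          (1 - omega3 * y ^ 4 * q ^ (n + 1)) /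
        ((1 - y⁻¹ * q ^ n) * (1 - y * q ^ (n + 1)) *
          (1 - omega3 ^ 2 * y⁻¹ * q ^ n) * (1 - omega3 * y * q ^ (n + 1)))))
    - y * (∏' n : ℕ,
      ((1 - q ^ (n + 1)) ^ 2 * (1 - omega3 * y⁻¹ ^ 4 * q ^ n) *
          (1 - omega3 ^ 2 * y ^ 4 * q ^ (n + 1)) /
        ((1 - y⁻¹ * q ^ n) * (1 - y * q ^ (n + 1)) *
          (1 - omega3 * y⁻¹ * q ^ n) * (1 - omega3 ^ 2 * y * q ^ (n + 1)))))
    = -Complex.I * (Eta (3 * τ) / Theta1 (3 * τ) (3 * z)) *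
        (Theta1 τ (4 * z + 1 / 3) * Theta1 τ (z - 1 / 3) +
          Theta1 τ (4 * z - 1 / 3) * Theta1 τ (z + 1 / 3)) := by
  have hq_norm : ‖q‖ < 1 := by
    rw [hq, norm_cexp_two_pi_I_mul, Real.exp_lt_one_iff]; nlinarith [Real.pi_pos]
  have hy_norm : 1 < ‖y‖ := by
    rw [hy, norm_cexp_two_pi_I_mul, Real.one_lt_exp_iff]; nlinarith [Real.pi_pos]
  have hyq_norm : ‖y * q‖ < 1 := by
    rw [hy, hq, ← exp_add, ← mul_add, norm_cexp_two_pi_I_mul, add_im, Real.exp_lt_one_iff]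
    nlinarith [Real.pi_pos]
  have hAB := tprod_quotient_eq_jacobiTripleProd omega3_sq_add_omega3_add_one
    hq_norm hy_norm hyq_norm
  have hCD := tprod_quotient_eq_jacobiTripleProd
    (by rw [omega3_sq_sq]; linear_combination omega3_sq_add_omega3_add_one)
    hq_norm hy_norm hyq_norm
  rw [omega3_sq_sq] at hCD
  have hq₃ : cexp (2 * π * I * (3 * τ)) = q ^ 3 := by rw [hq, ← exp_nat_mul]; ring_nf
  have hy₃ : cexp (2 * π * I * (3 * z)) = y ^ 3 := by rw [hy, ← exp_nat_mul]; ring_nf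
  have hy₄ : cexp (2 * π * I * (4 * z)) = y ^ 4 := by rw [hy, ← exp_nat_mul]; ring_nf
  have hτ₁ : cexp (π * I * (3 * τ) / 12) = cexp (π * I * τ / 4) := by ring_nf
  have hτ₃ : cexp (π * I * (3 * τ) / 4) = cexp (π * I * τ / 4) ^ 3 := by
    rw [← exp_nat_mul]; ring_nf
  have hz₅ : cexp (π * I * (5 * z)) = y * cexp (π * I * (3 * z)) := by
    rw [hy, ← exp_add]; ring_nf
  rw [hAB, hCD, Eta_eq, Theta1_eq_jacobiTripleProd, Theta1_mul_Theta1, Theta1_mul_Theta1,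
    show 4 * z + 1 / 3 + (z - 1 / 3) = 5 * z by ring,
    show 4 * z - 1 / 3 + (z + 1 / 3) = 5 * z by ring,
    cexp_two_pi_I_mul_add_third, cexp_two_pi_I_mul_add_third,
    cexp_two_pi_I_mul_sub_third, cexp_two_pi_I_mul_sub_third,
    ← hq, ← hy, hq₃, hy₃, hy₄, hτ₁, hτ₃, hz₅]
  field_simp
  ring
end

section
/- For all τ, z in the stated domain, the following infinite product identity holds: −2y ∏_{n≥1} (1−q^n)² (1−y⁻²q^{n−1}) (1−iy⁻²q^{n−1}) (1+iy⁻²q^{n−1}) (1−y²q^n) (1−iy²q^n) (1+iy²q^n) / [ ∏_{k∈{1,3,5,7}} (1−ζ₈^k y⁻¹q^{n−1}) (1−ζ₈^k yq^n) ] = −2i · η(τ) η(4τ) θ₁(τ,2z) θ₂(2τ,4z) / ( η(2τ) θ₂(4τ,4z) ). (This is the identity establishing that the graded trace attached to the class 8A of the umbral group G⁽⁴⁾ equals the umbral meromorphic Jacobi form ψ⁽⁴⁾_{8A}.) -/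
open Complex

/-- A primitive eighth root of unity, `ζ₈ = e^{πi/4}`. -/
noncomputable def zeta8 : ℂ := Complex.exp (Real.pi * Complex.I / 4)

/-!
Both sides are products of q-Pochhammer symbols `(a; q)_∞ = ∏ (1 - a qⁿ)`. On the trace side the
identities `(1 - i x)(1 + i x) = 1 + x²` and `∏_{k odd} (1 - ζ₈ᵏ x) = 1 + x⁴` turn each factor into
such symbols in `q`, `q²` and `q⁴`. On the modular side the triple products of `η`, `θ₁`, `θ₂`
split into the same symbols; `(q²; q²)_∞` and `(q⁴; q⁴)_∞` cancel, and so do the fractional powers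
of `q`, leaving `-2y` times the same quotient.
-/

lemma norm_pow_lt_one {x : ℂ} (hx : ‖x‖ < 1) {n : ℕ} (hn : n ≠ 0) : ‖x ^ n‖ < 1 := by
  rw [norm_pow]
  exact pow_lt_one₀ (norm_nonneg x) hx hn

lemma norm_exp_two_pi_I_mul_lt_one {w : ℂ} (hw : 0 < w.im) :
    ‖Complex.exp (2 * Real.pi * I * w)‖ < 1 := by
  simpa using UpperHalfPlane.norm_exp_two_pi_I_lt_one ⟨w, hw⟩

lemma exp_two_pi_I_nat_mul_mul (n : ℕ) (τ : ℂ) :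
    Complex.exp (2 * Real.pi * I * n * τ) = Complex.exp (2 * Real.pi * I * τ) ^ n := by
  rw [← Complex.exp_nat_mul]
  ring_nf

noncomputable def qPochhammer (a q : ℂ) : ℂ := ∏' n : ℕ, (1 - a * q ^ n)

section qPochhammer

variable {a q : ℂ}

lemma summable_norm_mul_pow (a : ℂ) (hq : ‖q‖ < 1) : Summable fun n : ℕ => ‖a * q ^ n‖ := by
  simpa [norm_mul, norm_pow] using
    (summable_geometric_of_lt_one (norm_nonneg q) hq).mul_left ‖a‖

lemma hasProd_qPochhammer (a : ℂ) (hq : ‖q‖ < 1) :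
    HasProd (fun n : ℕ => 1 - a * q ^ n) (qPochhammer a q) := by
  have : Multipliable fun n : ℕ => 1 - a * q ^ n := by
    simpa [sub_eq_add_neg] using multipliable_one_add_of_summable (f := fun n => -(a * q ^ n))
      (by simpa using summable_norm_mul_pow a hq)
  exact this.hasProd

lemma qPochhammer_ne_zero (ha : ‖a‖ < 1) (hq : ‖q‖ < 1) : qPochhammer a q ≠ 0 := by
  have hterm : ∀ n : ℕ, 1 + -(a * q ^ n) ≠ 0 := fun n => by
    rw [← sub_eq_add_neg, sub_ne_zero]
    refine fun h => (?_ : ¬ ‖a * q ^ n‖ < 1) ?_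
    · simp [← h]
    · rw [norm_mul, norm_pow]
      exact mul_lt_one_of_nonneg_of_lt_one_left (norm_nonneg a) ha
        (pow_le_one₀ (norm_nonneg q) hq.le)
  simpa [qPochhammer, sub_eq_add_neg] using
    tprod_one_add_ne_zero_of_summable hterm (by simpa using summable_norm_mul_pow a hq)

end qPochhammer

lemma zeta8_pow_four : zeta8 ^ 4 = -1 := by
  rw [zeta8, ← Complex.exp_nat_mul, ← Complex.exp_pi_mul_I]
  push_cast
  ring_nf

lemma prod_one_sub_zeta8_odd_pow_mul (x : ℂ) :
    (1 - zeta8 * x) * (1 - zeta8 ^ 3 * x) * (1 - zeta8 ^ 5 * x) * (1 - zeta8 ^ 7 * x)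
      = 1 + x ^ 4 := by
  linear_combination (-(zeta8 + zeta8 ^ 3) * x + zeta8 ^ 4 * (1 + zeta8 ^ 2 + zeta8 ^ 4) * x ^ 2
    - (zeta8 ^ 9 + zeta8 ^ 11) * x ^ 3 + (zeta8 ^ 12 - zeta8 ^ 8 + zeta8 ^ 4 - 1) * x ^ 4)
    * zeta8_pow_four

lemma Eta_eq_qPochhammer (τ : ℂ) : Eta τ = Complex.exp (Real.pi * I * τ / 12) *
    qPochhammer (Complex.exp (2 * Real.pi * I * τ)) (Complex.exp (2 * Real.pi * I * τ)) := by
  rw [Eta, qPochhammer]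
  congr 1
  refine tprod_congr fun n => ?_
  rw [← Nat.cast_add_one, exp_two_pi_I_nat_mul_mul, pow_succ']

lemma Theta1_eq_qPochhammer {τ : ℂ} (hτ : 0 < τ.im) (w : ℂ) :
    Theta1 τ w = -I * Complex.exp (Real.pi * I * τ / 4) * Complex.exp (Real.pi * I * w) *
      (qPochhammer (Complex.exp (2 * Real.pi * I * w))⁻¹ (Complex.exp (2 * Real.pi * I * τ)) *
        qPochhammer (Complex.exp (2 * Real.pi * I * w) * Complex.exp (2 * Real.pi * I * τ))
          (Complex.exp (2 * Real.pi * I * τ)) *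
        qPochhammer (Complex.exp (2 * Real.pi * I * τ)) (Complex.exp (2 * Real.pi * I * τ))) := by
  have hq := norm_exp_two_pi_I_mul_lt_one hτ
  rw [Theta1, ← (((hasProd_qPochhammer _ hq).mul (hasProd_qPochhammer _ hq)).mul
    (hasProd_qPochhammer _ hq)).tprod_eq]
  congr 1
  refine tprod_congr fun n => ?_
  rw [← Nat.cast_add_one, exp_two_pi_I_nat_mul_mul, exp_two_pi_I_nat_mul_mul, Complex.exp_neg]
  ring

lemma Theta2_eq_qPochhammer {τ : ℂ} (hτ : 0 < τ.im) (w : ℂ) :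
    Theta2 τ w = Complex.exp (Real.pi * I * τ / 4) * Complex.exp (Real.pi * I * w) *
      (qPochhammer (-(Complex.exp (2 * Real.pi * I * w))⁻¹) (Complex.exp (2 * Real.pi * I * τ)) *
        qPochhammer (-(Complex.exp (2 * Real.pi * I * w) * Complex.exp (2 * Real.pi * I * τ)))
          (Complex.exp (2 * Real.pi * I * τ)) *
        qPochhammer (Complex.exp (2 * Real.pi * I * τ)) (Complex.exp (2 * Real.pi * I * τ))) := by
  have hq := norm_exp_two_pi_I_mul_lt_one hτ
  rw [Theta2, ← (((hasProd_qPochhammer _ hq).mul (hasProd_qPochhammer _ hq)).mul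
    (hasProd_qPochhammer _ hq)).tprod_eq]
  congr 1
  refine tprod_congr fun n => ?_
  rw [← Nat.cast_add_one, exp_two_pi_I_nat_mul_mul, exp_two_pi_I_nat_mul_mul, Complex.exp_neg]
  ring

lemma tprod_umbral_8A_eq {q y : ℂ} (hq : ‖q‖ < 1) (hy : ‖y⁻¹‖ < 1) (hyq : ‖y * q‖ < 1) :
    ∏' n : ℕ,
      ((1 - q ^ (n + 1)) ^ 2 * (1 - y⁻¹ ^ 2 * q ^ n) * (1 - I * y⁻¹ ^ 2 * q ^ n) *
          (1 + I * y⁻¹ ^ 2 * q ^ n) * (1 - y ^ 2 * q ^ (n + 1)) *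
          (1 - I * y ^ 2 * q ^ (n + 1)) * (1 + I * y ^ 2 * q ^ (n + 1)) /
        ((1 - zeta8 * y⁻¹ * q ^ n) * (1 - zeta8 * y * q ^ (n + 1)) *
          (1 - zeta8 ^ 3 * y⁻¹ * q ^ n) * (1 - zeta8 ^ 3 * y * q ^ (n + 1)) *
          (1 - zeta8 ^ 5 * y⁻¹ * q ^ n) * (1 - zeta8 ^ 5 * y * q ^ (n + 1)) *
          (1 - zeta8 ^ 7 * y⁻¹ * q ^ n) * (1 - zeta8 ^ 7 * y * q ^ (n + 1))))
      = qPochhammer q q ^ 2 * qPochhammer (y ^ 2)⁻¹ q * qPochhammer (y ^ 2 * q) q *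
          qPochhammer (-(y ^ 4)⁻¹) (q ^ 2) * qPochhammer (-(y ^ 4 * q ^ 2)) (q ^ 2) /
        (qPochhammer (-(y ^ 4)⁻¹) (q ^ 4) * qPochhammer (-(y ^ 4 * q ^ 4)) (q ^ 4)) := by
  have hq2 := norm_pow_lt_one hq two_ne_zero
  have hq4 := norm_pow_lt_one hq four_ne_zero
  have hy4 : ‖-(y ^ 4)⁻¹‖ < 1 := by
    rw [norm_neg, ← inv_pow]
    exact norm_pow_lt_one hy four_ne_zero
  have hyq4 : ‖-(y ^ 4 * q ^ 4)‖ < 1 := by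
    rw [norm_neg, ← mul_pow]
    exact norm_pow_lt_one hyq four_ne_zero
  have h := (((((hasProd_qPochhammer q hq).pow 2).mul (hasProd_qPochhammer (y ^ 2)⁻¹ hq)).mul
    (hasProd_qPochhammer (y ^ 2 * q) hq)).mul (hasProd_qPochhammer (-(y ^ 4)⁻¹) hq2)).mul
    (hasProd_qPochhammer (-(y ^ 4 * q ^ 2)) hq2) |>.div₀
    ((hasProd_qPochhammer (-(y ^ 4)⁻¹) hq4).mul (hasProd_qPochhammer (-(y ^ 4 * q ^ 4)) hq4))
    (mul_ne_zero (qPochhammer_ne_zero hy4 hq4) (qPochhammer_ne_zero hyq4 hq4))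
  rw [← h.tprod_eq]
  refine tprod_congr fun n => ?_
  congr 1
  · linear_combination (1 - q ^ (n + 1)) ^ 2 * (1 - y⁻¹ ^ 2 * q ^ n) * (1 - y ^ 2 * q ^ (n + 1)) *
      ((y⁻¹ ^ 2 * q ^ n) ^ 2 * (y ^ 2 * q ^ (n + 1)) ^ 2 * (I ^ 2 - 1)
        - (y⁻¹ ^ 2 * q ^ n) ^ 2 - (y ^ 2 * q ^ (n + 1)) ^ 2) * I_sq
  · linear_combination
      (1 + (y * q ^ (n + 1)) ^ 4) * prod_one_sub_zeta8_odd_pow_mul (y⁻¹ * q ^ n) +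
      (1 - zeta8 * (y⁻¹ * q ^ n)) * (1 - zeta8 ^ 3 * (y⁻¹ * q ^ n)) *
        (1 - zeta8 ^ 5 * (y⁻¹ * q ^ n)) * (1 - zeta8 ^ 7 * (y⁻¹ * q ^ n)) *
        prod_one_sub_zeta8_odd_pow_mul (y * q ^ (n + 1))

lemma eta_theta_quotient_eq_qPochhammer {τ : ℂ} (hτ : 0 < τ.im) (z : ℂ) {q y : ℂ}
    (hq : Complex.exp (2 * Real.pi * I * τ) = q) (hy : Complex.exp (2 * Real.pi * I * z) = y) :
    -2 * I * Eta τ * Eta (4 * τ) * Theta1 τ (2 * z) * Theta2 (2 * τ) (4 * z) /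
        (Eta (2 * τ) * Theta2 (4 * τ) (4 * z))
      = -2 * y * (qPochhammer q q ^ 2 * qPochhammer (y ^ 2)⁻¹ q * qPochhammer (y ^ 2 * q) q *
          qPochhammer (-(y ^ 4)⁻¹) (q ^ 2) * qPochhammer (-(y ^ 4 * q ^ 2)) (q ^ 2) /
        (qPochhammer (-(y ^ 4)⁻¹) (q ^ 4) * qPochhammer (-(y ^ 4 * q ^ 4)) (q ^ 4))) := by
  have hq1 : ‖q‖ < 1 := hq ▸ norm_exp_two_pi_I_mul_lt_one hτ
  have hpoch2 :=
    qPochhammer_ne_zero (norm_pow_lt_one hq1 two_ne_zero) (norm_pow_lt_one hq1 two_ne_zero)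
  have hpoch4 :=
    qPochhammer_ne_zero (norm_pow_lt_one hq1 four_ne_zero) (norm_pow_lt_one hq1 four_ne_zero)
  obtain ⟨eq2, eq4, ey2, ey4⟩ :
      Complex.exp (2 * Real.pi * I * (2 * τ)) = q ^ 2 ∧
      Complex.exp (2 * Real.pi * I * (4 * τ)) = q ^ 4 ∧
      Complex.exp (2 * Real.pi * I * (2 * z)) = y ^ 2 ∧
      Complex.exp (2 * Real.pi * I * (4 * z)) = y ^ 4 := by
    subst hq hy
    refine ⟨?_, ?_, ?_, ?_⟩ <;> rw [← Complex.exp_nat_mul] <;> ring_nf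
  obtain ⟨ez2, ez4⟩ : Complex.exp (Real.pi * I * (2 * z)) = y ∧
      Complex.exp (Real.pi * I * (4 * z)) = y ^ 2 := by
    subst hy
    exact ⟨by ring_nf, by rw [← Complex.exp_nat_mul]; ring_nf⟩
  -- every fractional power of `q` that occurs is a power of `s = q^(1/24)`
  set s := Complex.exp (Real.pi * I * τ / 12) with hs
  obtain ⟨es2, es3, es4, es6, es12⟩ :
      Complex.exp (Real.pi * I * (2 * τ) / 12) = s ^ 2 ∧
      Complex.exp (Real.pi * I * τ / 4) = s ^ 3 ∧
      Complex.exp (Real.pi * I * (4 * τ) / 12) = s ^ 4 ∧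
      Complex.exp (Real.pi * I * (2 * τ) / 4) = s ^ 6 ∧
      Complex.exp (Real.pi * I * (4 * τ) / 4) = s ^ 12 := by
    refine ⟨?_, ?_, ?_, ?_, ?_⟩ <;> rw [hs, ← Complex.exp_nat_mul] <;> ring_nf
  rw [Eta_eq_qPochhammer, Eta_eq_qPochhammer, Eta_eq_qPochhammer, Theta1_eq_qPochhammer hτ,
    Theta2_eq_qPochhammer (by simpa using hτ), Theta2_eq_qPochhammer (by simpa using hτ),
    eq2, eq4, ey2, ey4, es2, es3, es4, es6, es12, ez2, ez4, hq, ← hs]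
  have hs0 : s ≠ 0 := Complex.exp_ne_zero _
  field_simp
  rw [I_sq]
  ring

/-- Umbral moonshine product identity for the class 8A of G⁽⁴⁾: the graded trace equals ψ⁽⁴⁾_{8A}. -/
theorem stmt_13 (τ z : ℂ) (h1 : 0 < -z.im) (h2 : -z.im < τ.im)
    (q y : ℂ)
    (hq : q = Complex.exp (2 * Real.pi * Complex.I * τ))
    (hy : y = Complex.exp (2 * Real.pi * Complex.I * z)) :
    -2 * y * (∏' n : ℕ,
      ((1 - q ^ (n + 1)) ^ 2 * (1 - y⁻¹ ^ 2 * q ^ n) * (1 - Complex.I * y⁻¹ ^ 2 * q ^ n) *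
          (1 + Complex.I * y⁻¹ ^ 2 * q ^ n) * (1 - y ^ 2 * q ^ (n + 1)) *
          (1 - Complex.I * y ^ 2 * q ^ (n + 1)) * (1 + Complex.I * y ^ 2 * q ^ (n + 1)) /
        ((1 - zeta8 * y⁻¹ * q ^ n) * (1 - zeta8 * y * q ^ (n + 1)) *
          (1 - zeta8 ^ 3 * y⁻¹ * q ^ n) * (1 - zeta8 ^ 3 * y * q ^ (n + 1)) *
          (1 - zeta8 ^ 5 * y⁻¹ * q ^ n) * (1 - zeta8 ^ 5 * y * q ^ (n + 1)) *
          (1 - zeta8 ^ 7 * y⁻¹ * q ^ n) * (1 - zeta8 ^ 7 * y * q ^ (n + 1)))))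
    = -2 * Complex.I * Eta τ * Eta (4 * τ) * Theta1 τ (2 * z) * Theta2 (2 * τ) (4 * z) /
        (Eta (2 * τ) * Theta2 (4 * τ) (4 * z)) := by
  have hτ : 0 < τ.im := by linarith
  have hq1 : ‖q‖ < 1 := hq ▸ norm_exp_two_pi_I_mul_lt_one hτ
  have hy1 : ‖y⁻¹‖ < 1 := by
    rw [hy, ← Complex.exp_neg, ← mul_neg]
    exact norm_exp_two_pi_I_mul_lt_one (by simpa using h1)
  have hyq : ‖y * q‖ < 1 := by
    rw [hy, hq, ← Complex.exp_add, ← mul_add]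
    exact norm_exp_two_pi_I_mul_lt_one (by rw [Complex.add_im]; linarith)
  rw [eta_theta_quotient_eq_qPochhammer hτ z hq.symm hy.symm, tprod_umbral_8A_eq hq1 hy1 hyq]
end
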